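/- If S ~ N(μ, 1), then the CDF t ↦ P(p(S) < t) of the two-sided p-value is a concave function of t on (0,1). -/

import Mathlib

open MeasureTheory

/-- Standard normal density. -/
noncomputable def stdNormalPDF (x : ℝ) : ℝ :=
  (Real.sqrt (2 * Real.pi))⁻¹ * Real.exp (-x ^ 2 / 2)

/-- Standard normal CDF. -/
noncomputable def Phi (x : ℝ) : ℝ := ∫ t in Set.Iic x, stdNormalPDF t

lemma pdf_pos (x : ℝ) : 0 < stdNormalPDF x := by
  have h : 0 < Real.sqrt (2 * Real.pi) :=
    Real.sqrt_pos.mpr (by positivity)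
  exact mul_pos (inv_pos.mpr h) (Real.exp_pos _)

lemma pdf_cont : Continuous stdNormalPDF := by
  unfold stdNormalPDF; continuity

lemma pdf_even (x : ℝ) : stdNormalPDF (-x) = stdNormalPDF x := by
  simp [stdNormalPDF]

lemma pdf_integrable : Integrable stdNormalPDF := by
  have h : Integrable (fun x : ℝ => Real.exp (-(2⁻¹ : ℝ) * x ^ 2)) :=
    integrable_exp_neg_mul_sq (by norm_num)
  have := h.const_mul ((Real.sqrt (2 * Real.pi))⁻¹)
  have heq : stdNormalPDF = fun x : ℝ => (Real.sqrt (2 * Real.pi))⁻¹ * Real.exp (-(2⁻¹:ℝ) * x ^ 2) := by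
    funext x; simp only [stdNormalPDF]; ring_nf
  rw [heq]; exact this

lemma pdf_total : ∫ x, stdNormalPDF x = 1 := by
  have h : ∫ x : ℝ, Real.exp (-(2⁻¹:ℝ) * x ^ 2) = Real.sqrt (Real.pi / 2⁻¹) :=
    integral_gaussian (2⁻¹ : ℝ)
  have h2 : ∫ x, stdNormalPDF x
      = (Real.sqrt (2 * Real.pi))⁻¹ * ∫ x : ℝ, Real.exp (-(2⁻¹:ℝ) * x ^ 2) := by
    rw [← integral_const_mul]
    congr 1 with x
    simp only [stdNormalPDF]
    ring_nf
  rw [h2, h]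
  have : Real.pi / 2⁻¹ = 2 * Real.pi := by ring
  rw [this]
  have hpos : 0 < Real.sqrt (2 * Real.pi) := Real.sqrt_pos.mpr (by positivity)
  field_simp

lemma Phi_hasDerivAt (x : ℝ) : HasDerivAt Phi (stdNormalPDF x) x := by
  have key : Phi = fun u => Phi 0 + ∫ t in (0:ℝ)..u, stdNormalPDF t := by
    funext u
    have := intervalIntegral.integral_Iic_sub_Iic (μ := volume) (f := stdNormalPDF)
      (pdf_integrable.integrableOn) (pdf_integrable.integrableOn) (a := 0) (b := u)
    simp only [Phi]
    linarith [this]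
  rw [key]
  exact (intervalIntegral.integral_hasDerivAt_right
    (pdf_cont.intervalIntegrable _ _)
    (pdf_cont.aestronglyMeasurable.stronglyMeasurableAtFilter)
    pdf_cont.continuousAt).const_add _

lemma Phi_strictMono : StrictMono Phi := by
  intro x y hxy
  have h : Phi y - Phi x = ∫ t in x..y, stdNormalPDF t := by
    have := intervalIntegral.integral_Iic_sub_Iic (μ := volume) (f := stdNormalPDF)
      (pdf_integrable.integrableOn) (pdf_integrable.integrableOn) (a := x) (b := y)
    simp only [Phi]; linarith [this]
  have hpos : 0 < ∫ t in x..y, stdNormalPDF t :=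
    intervalIntegral.intervalIntegral_pos_of_pos
      (pdf_cont.intervalIntegrable _ _) (fun t => pdf_pos t) hxy
  linarith

lemma Phi_zero : Phi 0 = 1 / 2 := by
  have hsym : (∫ t in Set.Iic (0:ℝ), stdNormalPDF t) = ∫ t in Set.Ioi (0:ℝ), stdNormalPDF t := by
    have := integral_comp_neg_Iic (0:ℝ) stdNormalPDF
    simpa [pdf_even] using this
  have hsplit : (∫ t in Set.Iic (0:ℝ), stdNormalPDF t) + ∫ t in Set.Ioi (0:ℝ), stdNormalPDF t
      = ∫ x, stdNormalPDF x := by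
    exact intervalIntegral.integral_Iic_add_Ioi (pdf_integrable.integrableOn) (pdf_integrable.integrableOn)
  rw [pdf_total] at hsplit
  simp only [Phi]
  linarith [hsym, hsplit]

lemma half_mem {t : ℝ} (ht : t ∈ Set.Ioo (0:ℝ) 1) : t / 2 ∈ Set.Ioo (0:ℝ) 1 :=
  ⟨by linarith [ht.1], by linarith [ht.2]⟩

lemma phinv_cont (Phinv : ℝ → ℝ) (hinv : ∀ p ∈ Set.Ioo (0:ℝ) 1, Phi (Phinv p) = p)
    {p : ℝ} (hp : p ∈ Set.Ioo (0:ℝ) 1) : ContinuousAt Phinv p := by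
  rw [Metric.continuousAt_iff]
  intro ε hε
  set x := Phinv p with hx
  have hlt : Phi (x - ε) < p := by
    rw [← hinv p hp]; exact Phi_strictMono (by linarith)
  have hgt : p < Phi (x + ε) := by
    rw [← hinv p hp]; exact Phi_strictMono (by linarith)
  refine ⟨min (min (p - Phi (x - ε)) (Phi (x + ε) - p)) (min p (1 - p)), by
    simp only [lt_min_iff]; exact ⟨⟨by linarith, by linarith⟩, ⟨hp.1, by linarith [hp.2]⟩⟩, ?_⟩
  intro p' hp'
  rw [Real.dist_eq] at hp' ⊢
  have h1 : |p' - p| < min (p - Phi (x - ε)) (Phi (x + ε) - p) := lt_of_lt_of_le hp' (min_le_left _ _)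
  have h2 : |p' - p| < min p (1 - p) := lt_of_lt_of_le hp' (min_le_right _ _)
  rw [abs_sub_lt_iff] at h1 h2
  simp only [lt_min_iff] at h1 h2
  have hp'mem : p' ∈ Set.Ioo (0:ℝ) 1 := ⟨by linarith [h2.2.1], by linarith [h2.1.2]⟩
  have hPhi' : Phi (Phinv p') = p' := hinv p' hp'mem
  have hl : Phi (x - ε) < Phi (Phinv p') := by rw [hPhi']; linarith [h1.2.1]
  have hr : Phi (Phinv p') < Phi (x + ε) := by rw [hPhi']; linarith [h1.1.2]
  have hl' : x - ε < Phinv p' := Phi_strictMono.lt_iff_lt.mp hl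
  have hr' : Phinv p' < x + ε := Phi_strictMono.lt_iff_lt.mp hr
  rw [abs_sub_lt_iff]
  constructor <;> linarith

lemma phinv_hasDerivAt (Phinv : ℝ → ℝ) (hinv : ∀ p ∈ Set.Ioo (0:ℝ) 1, Phi (Phinv p) = p)
    {p : ℝ} (hp : p ∈ Set.Ioo (0:ℝ) 1) :
    HasDerivAt Phinv (stdNormalPDF (Phinv p))⁻¹ p := by
  refine HasDerivAt.of_local_left_inverse (phinv_cont Phinv hinv hp)
    (Phi_hasDerivAt (Phinv p)) (ne_of_gt (pdf_pos _)) ?_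
  filter_upwards [isOpen_Ioo.mem_nhds hp] with y hy using hinv y hy

lemma pdf_ratio (a b : ℝ) : stdNormalPDF a * (stdNormalPDF b)⁻¹ = Real.exp (b ^ 2 / 2 - a ^ 2 / 2) := by
  have hc : Real.sqrt (2 * Real.pi) ≠ 0 :=
    ne_of_gt (Real.sqrt_pos.mpr (by positivity))
  simp only [stdNormalPDF, mul_inv, inv_inv]
  rw [Real.exp_sub]
  field_simp
  rw [← Real.exp_add]
  ring_nf
  rw [← Real.exp_add]
  ring_nf

lemma G_hasDerivAt (μ₀ : ℝ) (Phinv : ℝ → ℝ)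
    (hinv : ∀ p ∈ Set.Ioo (0:ℝ) 1, Phi (Phinv p) = p) {t : ℝ} (ht : t ∈ Set.Ioo (0:ℝ) 1) :
    HasDerivAt (fun t => 1 + Phi (Phinv (t/2) - μ₀) - Phi (-(Phinv (t/2)) - μ₀))
      (Real.exp (-μ₀ ^ 2 / 2) * Real.cosh (μ₀ * Phinv (t/2))) t := by
  set q := Phinv (t / 2) with hq
  set d : ℝ := (stdNormalPDF q)⁻¹ * (1 / 2) with hd
  have hhalf : HasDerivAt (fun t : ℝ => t / 2) (1 / 2) t := (hasDerivAt_id t).div_const 2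
  have hQ : HasDerivAt (fun t => Phinv (t / 2)) d t :=
    (phinv_hasDerivAt Phinv hinv (half_mem ht)).comp t hhalf
  have h1 : HasDerivAt (fun t => Phi (Phinv (t/2) - μ₀)) (stdNormalPDF (q - μ₀) * d) t :=
    by have := (Phi_hasDerivAt (q - μ₀)).comp t (hQ.sub_const μ₀); exact this
  have h2 : HasDerivAt (fun t => Phi (-(Phinv (t/2)) - μ₀)) (stdNormalPDF (-q - μ₀) * (-d)) t :=
    by have := (Phi_hasDerivAt (-q - μ₀)).comp t (hQ.neg.sub_const μ₀); exact this
  have hG := (h1.const_add 1).sub h2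
  refine hG.congr_deriv ?_
  have r1 := pdf_ratio (q - μ₀) q
  have r2 := pdf_ratio (-q - μ₀) q
  have e1 : q ^ 2 / 2 - (q - μ₀) ^ 2 / 2 = -μ₀ ^ 2 / 2 + μ₀ * q := by ring
  have e2 : q ^ 2 / 2 - (-q - μ₀) ^ 2 / 2 = -μ₀ ^ 2 / 2 + -(μ₀ * q) := by ring
  have lhs : stdNormalPDF (q - μ₀) * d - stdNormalPDF (-q - μ₀) * (-d)
      = (stdNormalPDF (q - μ₀) * (stdNormalPDF q)⁻¹
        + stdNormalPDF (-q - μ₀) * (stdNormalPDF q)⁻¹) / 2 := by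
    rw [hd]; ring
  rw [lhs, r1, r2, e1, e2, Real.exp_add, Real.exp_add, Real.cosh_eq]
  ring

/-- If `S ~ N(μ₀, 1)`, the CDF `G(t) = 1 + Φ(Φ⁻¹(t/2) - μ₀) - Φ(-Φ⁻¹(t/2) - μ₀)` of the
two-sided p-value is concave on `(0,1)`. -/
theorem twoSided_pvalue_cdf_concave
    (μ₀ : ℝ) (Phinv : ℝ → ℝ)
    (hinv : ∀ p ∈ Set.Ioo (0:ℝ) 1, Phi (Phinv p) = p) :
    ConcaveOn ℝ (Set.Ioo (0:ℝ) 1)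
      (fun t => 1 + Phi (Phinv (t/2) - μ₀) - Phi (-(Phinv (t/2)) - μ₀)) := by
  have hq_nonpos : ∀ t ∈ Set.Ioo (0:ℝ) 1, Phinv (t/2) ≤ 0 := by
    intro t ht
    by_contra h
    push_neg at h
    have : Phi 0 < Phi (Phinv (t/2)) := Phi_strictMono h
    rw [Phi_zero, hinv _ (half_mem ht)] at this
    linarith [ht.2]
  apply AntitoneOn.concaveOn_of_deriv (convex_Ioo 0 1)
  · intro t ht
    exact (G_hasDerivAt μ₀ Phinv hinv ht).differentiableAt.continuousAt.continuousWithinAt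
  · rw [interior_Ioo]
    intro t ht
    exact (G_hasDerivAt μ₀ Phinv hinv ht).differentiableAt.differentiableWithinAt
  · rw [interior_Ioo]
    intro a ha b hb hab
    rw [(G_hasDerivAt μ₀ Phinv hinv ha).deriv, (G_hasDerivAt μ₀ Phinv hinv hb).deriv]
    apply mul_le_mul_of_nonneg_left _ (Real.exp_pos _).le
    rw [Real.cosh_le_cosh, abs_mul, abs_mul]
    apply mul_le_mul_of_nonneg_left _ (abs_nonneg μ₀)
    have hqa : Phinv (a/2) ≤ 0 := hq_nonpos a ha
    have hqb : Phinv (b/2) ≤ 0 := hq_nonpos b hb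
    have hle : Phinv (a/2) ≤ Phinv (b/2) := by
      apply Phi_strictMono.le_iff_le.mp
      rw [hinv _ (half_mem ha), hinv _ (half_mem hb)]
      linarith
    rw [abs_of_nonpos hqa, abs_of_nonpos hqb]
    linarith
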